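/- arXiv:2406.13351 — 3 statements merged into one kernel-verified Lean document; each statement's English description precedes it below -/
import Mathlib

section
/- Deterministic form of the Fed-RAA convergence theorem (Theorem 1). There exists a constant C > 0, depending only on L, ρ, V₁, V₂, such that the following holds. Let E be a real inner product space and F : E → ℝ a differentiable function that is L-smooth and μ-weakly convex with ‖∇F(θ)‖² ≤ V₁ for all θ ∈ E. Fix ρ ≥ μ with ρ ≥ 0, α ∈ (0,1], γ > 0, ε > 0, natural numbers T ≥ 1, 1 ≤ I_min ≤ I_max, and K ≥ 0. Suppose we are given: a sequence θ₀, θ₁, …, θ_T in E; for each q ∈ {1,…,T} a stale index τ(q) ∈ {0,…,q−1} with q−1−τ(q) ≤ K and an integer I_q with I_min ≤ I_q ≤ I_max; local iterates θ_{q,0} = θ_{τ(q)} and θ_{q,i} = θ_{q,i−1} − γ·d_{q,i} for i = 1,…,I_q, where the directions d_{q,i} ∈ E satisfy ‖d_{q,i}‖² ≤ V₂ and ⟪∇F(θ_{q,i−1}) + ρ·(θ_{q,i−1} − θ_{τ(q)}), d_{q,i}⟫ ≥ ε‖∇F(θ_{q,i−1})‖²; the mixing update θ_q = (1−α)·θ_{q−1}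 + α·θ_{q,I_q}; and the global increment bound ‖θ_s − θ_{s−1}‖ ≤ α·γ·I_max·√V₂ for all s ∈ {1,…,T}. Then min over all q ∈ {1,…,T} and i ∈ {1,…,I_q} of ‖∇F(θ_{q,i−1})‖² is at most (F(θ₀) − F(θ_T))/(α·γ·ε·T·I_min) + C·(γ·I_max³ + α·K·I_max + α²·γ·K²·I_max² + γ·K²·I_max²)/(ε·I_min). -/
/-!
Inside round `q`, `L`-smoothness and the direction condition make every local step decrease `F` by
`γ ε ‖∇F‖²` up to an error `O(γ² I_max)` coming from the proximal pull `ρ (θ_{q,i-1} - θ_{τ(q)})`,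
whose size is controlled by the drift `‖θ_{q,i-1} - θ_{τ(q)}‖ ≤ γ I_max √V₂`. Weak convexity
along the segment from `θ_{q-1}` to `θ_{q,I_q}` transfers an `α`-fraction of this decrease to
`θ_q`, at the cost of the staleness gap `F θ_{τ(q)} - F θ_{q-1}` (smoothness together with
`‖θ_{τ(q)} - θ_{q-1}‖ ≤ K α γ I_max √V₂`) and a curvature term. Summing over the rounds
telescopes, and the smallest gradient norm is at most the average.
-/

open Finset

lemma norm_sub_le_of_norm_sub_pred_le {E : Type*} [SeminormedAddCommGroup E] {f : ℕ → E}
    {B : ℝ} {T m n : ℕ} (h : ∀ s ∈ Icc 1 T, ‖f s - f (s - 1)‖ ≤ B) (hmn : m ≤ n) (hnT : n ≤ T) :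
    ‖f n - f m‖ ≤ (n - m : ℕ) * B := by
  have := dist_le_Ico_sum_of_dist_le (f := f) hmn (d := fun _ => B) fun {k} hmk hkn => by
    simpa [dist_eq_norm'] using h (k + 1) (mem_Icc.2 ⟨by omega, by omega⟩)
  simpa [dist_eq_norm, norm_sub_rev (f m)] using this

lemma le_sub_sum_add_of_le_sub_add {u a : ℕ → ℝ} {b : ℝ} {n : ℕ}
    (h : ∀ i ∈ Icc 1 n, u i ≤ u (i - 1) - a i + b) :
    u n ≤ u 0 - ∑ i ∈ Icc 1 n, a i + n * b := by
  induction n with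
  | zero => simp
  | succ n ih =>
    have hlast := h (n + 1) (by simp)
    have hprev := ih fun i hi => h i (by simp only [mem_Icc] at hi ⊢; omega)
    rw [sum_Icc_succ_top (by omega)]
    push_cast
    simp only [add_tsub_cancel_right] at hlast
    linarith

lemma mul_sq_le_abs_mul_sq (L : ℝ) {t r : ℝ} (ht : 0 ≤ t) (htr : t ≤ r) :
    L * t ^ 2 ≤ |L| * r ^ 2 :=
  (mul_le_mul_of_nonneg_right (le_abs_self L) (sq_nonneg t)).trans
    (mul_le_mul_of_nonneg_left (pow_le_pow_left₀ ht htr 2) (abs_nonneg L))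

lemma Finset.exists_le_of_sum_sum_le {ι κ : Type*} {s : Finset ι} {t : ι → Finset κ}
    {f : ι → κ → ℝ} {N : ℕ} {X : ℝ} (hs : s.Nonempty) (hN : 0 < N)
    (ht : ∀ i ∈ s, N ≤ #(t i)) (hf : ∀ i ∈ s, ∀ j ∈ t i, 0 ≤ f i j)
    (h : ∑ i ∈ s, ∑ j ∈ t i, f i j ≤ #s * N * X) : ∃ i ∈ s, ∃ j ∈ t i, f i j ≤ X := by
  obtain ⟨i₀, hi₀⟩ := hs
  obtain ⟨j₀, hj₀⟩ := card_pos.1 (hN.trans_le (ht i₀ hi₀))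
  obtain ⟨⟨i, j⟩, hij, hmin⟩ := (s.sigma t).exists_min_image (fun p => f p.1 p.2)
    ⟨⟨i₀, j₀⟩, mem_sigma.2 ⟨hi₀, hj₀⟩⟩
  obtain ⟨hi, hj⟩ := mem_sigma.1 hij
  refine ⟨i, hi, j, hj, ?_⟩
  have hm : 0 ≤ f i j := hf i hi j hj
  have hlower : #s * N * f i j ≤ ∑ i ∈ s, ∑ j ∈ t i, f i j := by
    rw [mul_assoc, ← nsmul_eq_mul, ← sum_const]
    refine sum_le_sum fun i' hi' => ?_
    calc (N : ℝ) * f i j ≤ #(t i') * f i j := by gcongr; exact_mod_cast ht i' hi'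
      _ = ∑ _j ∈ t i', f i j := by rw [sum_const, nsmul_eq_mul]
      _ ≤ ∑ j' ∈ t i', f i' j' := sum_le_sum fun j' hj' => hmin ⟨i', j'⟩ (mem_sigma.2 ⟨hi', hj'⟩)
  have hpos : (0 : ℝ) < #s * N := by
    have : 0 < #s := card_pos.2 ⟨i₀, hi₀⟩
    positivity
  exact le_of_mul_le_mul_left (by linarith) hpos

lemma fedRAA_round_error_le {ρ L M G α γ : ℝ} {n N K : ℕ} (hρ : 0 ≤ ρ) (hM : 0 ≤ M) (hG : 0 ≤ G)
    (hα : 0 ≤ α) (hγ : 0 ≤ γ) (hN : 1 ≤ N) (hn : n ≤ N) :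
    n * (γ ^ 2 * (ρ * n + |L| / 2) * G ^ 2) + (M * (K * (α * γ * N * G)) +
      |L| / 2 * (K * (α * γ * N * G)) ^ 2 + ρ / 2 * (n * (γ * G) + K * (α * γ * N * G)) ^ 2) ≤
    ((2 * ρ + |L|) * G ^ 2 + M * G) * γ *
      (γ * N ^ 3 + α * K * N + α ^ 2 * γ * K ^ 2 * N ^ 2 + γ * K ^ 2 * N ^ 2) := by
  have hN1 : (1 : ℝ) ≤ N := by exact_mod_cast hN
  have hN2 : (N : ℝ) ^ 2 ≤ N ^ 3 := by nlinarith
  have hN3 : (N : ℝ) ≤ N ^ 3 := by nlinarith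
  have hL := abs_nonneg L
  calc _ ≤ N * (γ ^ 2 * (ρ * N + |L| / 2) * G ^ 2) + (M * (K * (α * γ * N * G)) +
      |L| / 2 * (K * (α * γ * N * G)) ^ 2 + ρ / 2 * (N * (γ * G) + K * (α * γ * N * G)) ^ 2) := by
        gcongr
    _ ≤ γ ^ 2 * G ^ 2 * (2 * ρ * N ^ 2 + |L| / 2 * N) + M * G * γ * (α * K * N) +
        (ρ + |L| / 2) * G ^ 2 * γ * (α ^ 2 * γ * K ^ 2 * N ^ 2) := by
        nlinarith [mul_nonneg hρ (sq_nonneg (N * (γ * G) - K * (α * γ * N * G)))]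
    _ ≤ (2 * ρ + |L|) * G ^ 2 * γ * (γ * N ^ 3) + M * G * γ * (α * K * N) +
        (2 * ρ + |L|) * G ^ 2 * γ * (α ^ 2 * γ * K ^ 2 * N ^ 2) := by
        have hc : 0 ≤ γ ^ 2 * G ^ 2 := by positivity
        gcongr ?_ + _ + ?_
        · nlinarith [mul_le_mul_of_nonneg_left hN2 (mul_nonneg hc hρ),
            mul_le_mul_of_nonneg_left hN3 (mul_nonneg hc hL),
            mul_nonneg (mul_nonneg hc hL) (Nat.cast_nonneg N)]
        · gcongr <;> linarith
    _ ≤ _ := by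
        have hMG : 0 ≤ M * G := by positivity
        have hc : 0 ≤ (2 * ρ + |L|) * G ^ 2 := by positivity
        nlinarith [mul_nonneg hc (by positivity : 0 ≤ γ * (α * K * N + γ * K ^ 2 * N ^ 2)),
          mul_nonneg hMG (by positivity : 0 ≤ γ * (γ * N ^ 3 + α ^ 2 * γ * K ^ 2 * N ^ 2 +
            γ * K ^ 2 * N ^ 2))]

lemma norm_sub_zero_le_of_step {E : Type*} [SeminormedAddCommGroup E] [NormedSpace ℝ E]
    {z d : ℕ → E} {γ G : ℝ} {n : ℕ} (hγ : 0 ≤ γ)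
    (hstep : ∀ i ∈ Icc 1 n, z i = z (i - 1) - γ • d i) (hd : ∀ i ∈ Icc 1 n, ‖d i‖ ≤ G)
    {k : ℕ} (hk : k ≤ n) : ‖z k - z 0‖ ≤ k * (γ * G) := by
  simpa using norm_sub_le_of_norm_sub_pred_le (fun i hi => by
    rw [hstep i hi, sub_sub_cancel_left, norm_neg, norm_smul, Real.norm_of_nonneg hγ]
    exact mul_le_mul_of_nonneg_left (hd i hi) hγ) (Nat.zero_le k) hk

section Smooth

variable {E : Type*} [NormedAddCommGroup E] [InnerProductSpace ℝ E] {F : E → ℝ} {F' : E → E}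
  {L : ℝ}

def IsSmoothWith (L : ℝ) (F : E → ℝ) (F' : E → E) : Prop :=
  ∀ x y, F y - F x ≤ inner ℝ (F' x) (y - x) + L / 2 * ‖y - x‖ ^ 2

lemma IsSmoothWith.sub_le (hF : IsSmoothWith L F F')
    {x y : E} {M s : ℝ} (hM : ‖F' x‖ ≤ M) (hs : ‖y - x‖ ≤ s) :
    F y - F x ≤ M * s + |L| / 2 * s ^ 2 := by
  have hinner : inner ℝ (F' x) (y - x) ≤ M * s :=
    (real_inner_le_norm _ _).trans (mul_le_mul hM hs (norm_nonneg _) ((norm_nonneg _).trans hM))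
  linarith [hF x y, mul_sq_le_abs_mul_sq L (norm_nonneg _) hs]

lemma IsSmoothWith.apply_sub_smul_le (hF : IsSmoothWith L F F')
    (x d : E) {γ G : ℝ} (hγ : 0 ≤ γ) (hd : ‖d‖ ≤ G) :
    F (x - γ • d) ≤ F x - γ * inner ℝ (F' x) d + |L| / 2 * (γ * G) ^ 2 := by
  have h := hF x (x - γ • d)
  rw [sub_sub_cancel_left, inner_neg_right, real_inner_smul_right, norm_neg, norm_smul,
    Real.norm_of_nonneg hγ] at h
  linarith [mul_sq_le_abs_mul_sq L (by positivity) (mul_le_mul_of_nonneg_left hd hγ)]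

theorem IsSmoothWith.local_descent (hF : IsSmoothWith L F F')
    {ρ γ ε G : ℝ} (hρ : 0 ≤ ρ) (hγ : 0 ≤ γ) {n : ℕ} {z d : ℕ → E}
    (hstep : ∀ i ∈ Icc 1 n, z i = z (i - 1) - γ • d i) (hd : ∀ i ∈ Icc 1 n, ‖d i‖ ≤ G)
    (hdir : ∀ i ∈ Icc 1 n,
      ε * ‖F' (z (i - 1))‖ ^ 2 ≤ inner ℝ (F' (z (i - 1)) + ρ • (z (i - 1) - z 0)) (d i)) :
    F (z n) ≤ F (z 0) - γ * ε * ∑ i ∈ Icc 1 n, ‖F' (z (i - 1))‖ ^ 2 +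
      n * (γ ^ 2 * (ρ * n + |L| / 2) * G ^ 2) := by
  rw [mul_sum]
  refine le_sub_sum_add_of_le_sub_add (u := fun i => F (z i))
    (a := fun i => γ * ε * ‖F' (z (i - 1))‖ ^ 2) fun i hi => ?_
  obtain ⟨hi1, hin⟩ := mem_Icc.1 hi
  have hG : 0 ≤ G := (norm_nonneg _).trans (hd i hi)
  have hdrift : ‖z (i - 1) - z 0‖ ≤ n * (γ * G) :=
    (norm_sub_zero_le_of_step hγ hstep hd (by omega)).trans (by gcongr; omega)
  have hpull : inner ℝ (z (i - 1) - z 0) (d i) ≤ n * (γ * G) * G :=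
    (real_inner_le_norm _ _).trans (mul_le_mul hdrift (hd i hi) (norm_nonneg _) (by positivity))
  have hdir' := hdir i hi
  rw [inner_add_left, real_inner_smul_left] at hdir'
  have hdesc : γ * (ε * ‖F' (z (i - 1))‖ ^ 2) ≤
      γ * inner ℝ (F' (z (i - 1))) (d i) + γ * (ρ * (n * (γ * G) * G)) := by
    rw [← mul_add]
    exact mul_le_mul_of_nonneg_left (hdir'.trans (by gcongr)) hγ
  have hstep' := hF.apply_sub_smul_le (z (i - 1)) (d i) hγ (hd i hi)
  rw [← hstep i hi] at hstep'
  linarith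

/-- `μ`-weak convexity is `(-μ)`-strong convexity: it bounds `F` along the mixing segment with
no derivative, at the price of the curvature term `μ / 2 * α * (1 - α) * ‖y - x‖ ^ 2`. -/
theorem IsSmoothWith.mixing_step_le (hF : IsSmoothWith L F F')
    {μ ρ : ℝ} (hconv : StrongConvexOn Set.univ (-μ) F) (hμ : 0 ≤ μ) (hμρ : μ ≤ ρ) {α : ℝ}
    (hα0 : 0 ≤ α) (hα1 : α ≤ 1) {x xs y : E} {M r s : ℝ} (hM : ‖F' x‖ ≤ M)
    (hs : ‖xs - x‖ ≤ s) (hr : ‖y - xs‖ ≤ r) :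
    F ((1 - α) • x + α • y) ≤
      F x + α * (F y - F xs) + α * (M * s + |L| / 2 * s ^ 2 + ρ / 2 * (r + s) ^ 2) := by
  have hcomb := hconv.2 (Set.mem_univ x) (Set.mem_univ y) (sub_nonneg.2 hα1) hα0 (by ring)
  simp only [smul_eq_mul] at hcomb
  have hgap := mul_le_mul_of_nonneg_left (hF.sub_le hM hs) hα0
  have hxy : ‖x - y‖ ≤ r + s := by
    rw [norm_sub_rev]
    exact (norm_sub_le_norm_sub_add_norm_sub y xs x).trans (add_le_add hr hs)
  have hcurv : (1 - α) * α * (μ / 2 * ‖x - y‖ ^ 2) ≤ α * (ρ / 2 * (r + s) ^ 2) :=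
    calc (1 - α) * α * (μ / 2 * ‖x - y‖ ^ 2) ≤ 1 * α * (μ / 2 * (r + s) ^ 2) := by
          gcongr; linarith
      _ ≤ α * (ρ / 2 * (r + s) ^ 2) := by rw [one_mul]; gcongr
  linarith

theorem IsSmoothWith.fedRAA_round_descent (hF : IsSmoothWith L F F') {μ ρ M G α γ ε : ℝ}
    (hconv : StrongConvexOn Set.univ (-μ) F) (hμ : 0 ≤ μ) (hμρ : μ ≤ ρ)
    (hM : ∀ x, ‖F' x‖ ≤ M) (hG : 0 ≤ G) (hα0 : 0 ≤ α) (hα1 : α ≤ 1) (hγ : 0 ≤ γ)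
    {n N K : ℕ} (hN : 1 ≤ N) (hn : n ≤ N) {x xs : E} {z d : ℕ → E} (hz0 : z 0 = xs)
    (hstep : ∀ i ∈ Icc 1 n, z i = z (i - 1) - γ • d i) (hd : ∀ i ∈ Icc 1 n, ‖d i‖ ≤ G)
    (hdir : ∀ i ∈ Icc 1 n,
      ε * ‖F' (z (i - 1))‖ ^ 2 ≤ inner ℝ (F' (z (i - 1)) + ρ • (z (i - 1) - xs)) (d i))
    (hs : ‖xs - x‖ ≤ K * (α * γ * N * G)) :
    F ((1 - α) • x + α • z n) ≤ F x - α * γ * ε * ∑ i ∈ Icc 1 n, ‖F' (z (i - 1))‖ ^ 2 +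
      α * (((2 * ρ + |L|) * G ^ 2 + M * G) * γ *
        (γ * N ^ 3 + α * K * N + α ^ 2 * γ * K ^ 2 * N ^ 2 + γ * K ^ 2 * N ^ 2)) := by
  subst hz0
  have hρ : 0 ≤ ρ := hμ.trans hμρ
  have hlocal := hF.local_descent hρ hγ hstep hd hdir
  have hround := hF.mixing_step_le hconv hμ hμρ hα0 hα1 (hM x) hs
    (norm_sub_zero_le_of_step hγ hstep hd le_rfl)
  have herr := fedRAA_round_error_le (L := L) (K := K) (α := α) hρ ((norm_nonneg _).trans (hM x))
    hG hα0 hγ hN hn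
  linarith [mul_le_mul_of_nonneg_left hlocal hα0, mul_le_mul_of_nonneg_left herr hα0]

end Smooth

/-- **Deterministic form of the Fed-RAA convergence theorem (Theorem 1).**
There is a constant `C > 0` depending only on `L, ρ, V₁, V₂` such that for any `L`-smooth,
`μ`-weakly convex differentiable `F` (gradient `F'`, `‖F' θ‖² ≤ V₁`), any `ρ ≥ μ`, `ρ ≥ 0`,
`α ∈ (0,1]`, `γ > 0`, `ε > 0`, `T ≥ 1`, `1 ≤ I_min ≤ I_max`, `K ≥ 0`, and any trajectory
(global models `θ q`, stale indices `τ q` with `τ q < q` and `q - 1 - τ q ≤ K`, local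
iterate counts `I_min ≤ I q ≤ I_max`, local iterates `θloc` driven by directions `d` with
`‖d q i‖² ≤ V₂` and `⟪∇F(θloc q (i-1)) + ρ(θloc q (i-1) - θ (τ q)), d q i⟫ ≥
ε ‖∇F(θloc q (i-1))‖²`, mixing updates `θ q = (1-α) θ (q-1) + α θloc q (I q)`, and global
increments bounded by `α γ I_max √V₂`), the minimum of `‖∇F(θloc q (i-1))‖²` over
`q ∈ {1,…,T}`, `i ∈ {1,…,I q}` is at most
`(F(θ 0) - F(θ T))/(α γ ε T I_min) +
 C (γ I_max³ + α K I_max + α² γ K² I_max² + γ K² I_max²)/(ε I_min)`. -/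
theorem fedRAA_deterministic_convergence (L ρ V₁ V₂ : ℝ) :
    ∃ C > (0 : ℝ),
      ∀ (E : Type*) [NormedAddCommGroup E] [InnerProductSpace ℝ E]
        (F : E → ℝ) (F' : E → E) (μ : ℝ),
        (∀ x, HasFDerivAt F (innerSL ℝ (F' x)) x) →
        (∀ x y : E, F y - F x ≤ inner ℝ (F' x) (y - x) + L / 2 * ‖y - x‖ ^ 2) →
        0 ≤ μ →
        ConvexOn ℝ Set.univ (fun θ => F θ + μ / 2 * ‖θ‖ ^ 2) →
        (∀ θ : E, ‖F' θ‖ ^ 2 ≤ V₁) →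
        μ ≤ ρ → 0 ≤ ρ →
        ∀ (α γ ε : ℝ), α ∈ Set.Ioc (0 : ℝ) 1 → 0 < γ → 0 < ε →
        ∀ (T Imin Imax K : ℕ), 1 ≤ T → 1 ≤ Imin → Imin ≤ Imax →
        ∀ (θ : ℕ → E) (τ : ℕ → ℕ) (I : ℕ → ℕ) (θloc : ℕ → ℕ → E) (d : ℕ → ℕ → E),
        (∀ q ∈ Finset.Icc 1 T, τ q < q ∧ q - 1 - τ q ≤ K) →
        (∀ q ∈ Finset.Icc 1 T, Imin ≤ I q ∧ I q ≤ Imax) →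
        (∀ q ∈ Finset.Icc 1 T, θloc q 0 = θ (τ q)) →
        (∀ q ∈ Finset.Icc 1 T, ∀ i ∈ Finset.Icc 1 (I q),
          θloc q i = θloc q (i - 1) - γ • d q i) →
        (∀ q ∈ Finset.Icc 1 T, ∀ i ∈ Finset.Icc 1 (I q), ‖d q i‖ ^ 2 ≤ V₂) →
        (∀ q ∈ Finset.Icc 1 T, ∀ i ∈ Finset.Icc 1 (I q),
          ε * ‖F' (θloc q (i - 1))‖ ^ 2 ≤
            inner ℝ (F' (θloc q (i - 1)) + ρ • (θloc q (i - 1) - θ (τ q))) (d q i)) →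
        (∀ q ∈ Finset.Icc 1 T, θ q = (1 - α) • θ (q - 1) + α • θloc q (I q)) →
        (∀ s ∈ Finset.Icc 1 T, ‖θ s - θ (s - 1)‖ ≤ α * γ * Imax * Real.sqrt V₂) →
        ∃ q ∈ Finset.Icc 1 T, ∃ i ∈ Finset.Icc 1 (I q),
          ‖F' (θloc q (i - 1))‖ ^ 2 ≤
            (F (θ 0) - F (θ T)) / (α * γ * ε * T * Imin) +
              C * (γ * (Imax : ℝ) ^ 3 + α * K * Imax +
                α ^ 2 * γ * K ^ 2 * (Imax : ℝ) ^ 2 + γ * K ^ 2 * (Imax : ℝ) ^ 2) /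
                (ε * Imin) := by
  refine ⟨1 + (2 * |ρ| + |L|) * |V₂| + √V₁ * √V₂, by positivity, ?_⟩
  intro E _ _ F F' μ _ hsmooth hμ hconv hV₁ hμρ hρ α γ ε ⟨hα0, hα1⟩ hγ hε T Imin Imax K hT hImin
    hImax θ τ I θloc d hτ hI hloc0 hlocstep hdV hdir hmix hinc
  have hsc : StrongConvexOn Set.univ (-μ) F :=
    strongConvexOn_iff_convex.2 (by simpa [neg_div] using hconv)
  have hC : (2 * ρ + |L|) * √V₂ ^ 2 + √V₁ * √V₂ ≤ 1 + (2 * |ρ| + |L|) * |V₂| + √V₁ * √V₂ := by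
    have : √V₂ ^ 2 ≤ |V₂| := Real.sq_sqrt' ▸ max_le (le_abs_self _) (abs_nonneg _)
    rw [abs_of_nonneg hρ]
    nlinarith [abs_nonneg L]
  set C := 1 + (2 * |ρ| + |L|) * |V₂| + √V₁ * √V₂
  set brk := γ * (Imax : ℝ) ^ 3 + α * K * Imax + α ^ 2 * γ * K ^ 2 * (Imax : ℝ) ^ 2 +
    γ * K ^ 2 * (Imax : ℝ) ^ 2
  have hround : ∀ q ∈ Icc 1 T, F (θ q) ≤
      F (θ (q - 1)) - α * γ * ε * ∑ i ∈ Icc 1 (I q), ‖F' (θloc q (i - 1))‖ ^ 2 +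
        α * (C * γ * brk) := by
    intro q hq
    obtain ⟨hτq, hK⟩ := hτ q hq
    have hstale : ‖θ (τ q) - θ (q - 1)‖ ≤ K * (α * γ * Imax * √V₂) := by
      rw [norm_sub_rev]
      refine (norm_sub_le_of_norm_sub_pred_le hinc (by omega) (by simp at hq; omega)).trans ?_
      gcongr
    rw [hmix q hq]
    refine (IsSmoothWith.fedRAA_round_descent hsmooth hsc hμ hμρ
      (fun x => Real.le_sqrt_of_sq_le (hV₁ x)) (Real.sqrt_nonneg _) hα0.le hα1 hγ.le
      (hImin.trans hImax) (hI q hq).2 (hloc0 q hq) (hlocstep q hq)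
      (fun i hi => Real.le_sqrt_of_sq_le (hdV q hq i hi)) (hdir q hq) hstale).trans ?_
    gcongr
  have htotal := le_sub_sum_add_of_le_sub_add (u := fun q => F (θ q)) hround
  rw [← mul_sum] at htotal
  refine exists_le_of_sum_sum_le ⟨1, by simp [hT]⟩ hImin (fun q hq => by simpa using (hI q hq).1)
    (fun _ _ _ _ => sq_nonneg _) ?_
  calc _ ≤ (F (θ 0) - F (θ T) + T * (α * (C * γ * brk))) / (α * γ * ε) := by
        rw [le_div_iff₀ (by positivity)]; linarith
    _ = _ := by
        simp only [Nat.card_Icc, add_tsub_cancel_right]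
        field_simp
end

section
/- Inner-product lower bound for the regularized descent direction. Let E be a real inner product space, u, v, w ∈ E, and ρ > 0, ε > 0, V₁ > 0 real numbers. If ‖u‖² ≤ V₁, ‖v‖² ≤ V₁, and ρ²·‖w‖² − (ρ/2)·‖w‖² ≥ (1 + 2ρ + ε)·V₁, then ⟪u + ρ·w, v + ρ·w⟫ ≥ ε·‖u‖². -/
/-! Expanding the inner product leaves `⟪u, v⟫ + ρ (⟪u, w⟫ + ⟪w, v⟫) + ρ² ‖w‖²`. Cauchy–Schwarz
and Young bound the cross terms below by `-V₁` and `-(V₁ + ‖w‖² / 4)`, so the hypothesis on `w`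
leaves at least `ε V₁ ≥ ε ‖u‖²`. -/

open RealInnerProductSpace

section
variable {F : Type*} [NormedAddCommGroup F] [InnerProductSpace ℝ F]

theorem real_inner_add_smul_add_smul (x y z : F) (r : ℝ) :
    ⟪x + r • z, y + r • z⟫ = ⟪x, y⟫ + r * (⟪x, z⟫ + ⟪z, y⟫) + r ^ 2 * ‖z‖ ^ 2 := by
  simp only [inner_add_left, inner_add_right, real_inner_smul_left, real_inner_smul_right,
    real_inner_self_eq_norm_sq, norm_smul, mul_pow, Real.norm_eq_abs, sq_abs]
  ring

theorem neg_real_inner_le_young (x y : F) {t : ℝ} (ht : 0 < t) :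
    -⟪x, y⟫ ≤ (t * ‖x‖ ^ 2 + ‖y‖ ^ 2 / t) / 2 := by
  have hcs : -⟪x, y⟫ ≤ ‖x‖ * ‖y‖ := (neg_le_abs _).trans (abs_real_inner_le_norm x y)
  have hyoung : 2 * (‖x‖ * ‖y‖) ≤ t * ‖x‖ ^ 2 + ‖y‖ ^ 2 / t := by
    rw [← sub_nonneg]
    have key : t * ‖x‖ ^ 2 + ‖y‖ ^ 2 / t - 2 * (‖x‖ * ‖y‖) = (t * ‖x‖ - ‖y‖) ^ 2 / t := by
      field_simp
      ring
    rw [key]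
    positivity
  linarith

end

theorem inner_lower_bound_regularized_direction_general
    {E : Type*} [NormedAddCommGroup E] [InnerProductSpace ℝ E]
    (u v w : E) (ρ ε V₁ : ℝ) (hρ : 0 < ρ) (hε : 0 < ε)
    (hu : ‖u‖ ^ 2 ≤ V₁) (hv : ‖v‖ ^ 2 ≤ V₁)
    (hw : (1 + 2 * ρ + ε) * V₁ ≤ ρ ^ 2 * ‖w‖ ^ 2 - ρ / 2 * ‖w‖ ^ 2) :
    ε * ‖u‖ ^ 2 ≤ inner ℝ (u + ρ • w) (v + ρ • w) := by
  have huv : -V₁ ≤ ⟪u, v⟫ := by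
    have := neg_real_inner_le_young u v one_pos
    linarith
  have huw : -(V₁ + ‖w‖ ^ 2 / 4) ≤ ⟪u, w⟫ := by
    have := neg_real_inner_le_young u w two_pos
    linarith
  have hwv : -(V₁ + ‖w‖ ^ 2 / 4) ≤ ⟪w, v⟫ := by
    have := neg_real_inner_le_young v w two_pos
    rw [real_inner_comm] at this
    linarith
  calc ε * ‖u‖ ^ 2 ≤ ε * V₁ := by gcongr
    _ ≤ -V₁ + ρ * (-(V₁ + ‖w‖ ^ 2 / 4) + -(V₁ + ‖w‖ ^ 2 / 4)) + ρ ^ 2 * ‖w‖ ^ 2 := by linarith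
    _ ≤ ⟪u, v⟫ + ρ * (⟪u, w⟫ + ⟪w, v⟫) + ρ ^ 2 * ‖w‖ ^ 2 := by gcongr
    _ = inner ℝ (u + ρ • w) (v + ρ • w) := (real_inner_add_smul_add_smul u v w ρ).symm

/-- **Inner-product lower bound for the regularized descent direction.**
If `‖u‖² ≤ V₁`, `‖v‖² ≤ V₁` and `ρ²‖w‖² - (ρ/2)‖w‖² ≥ (1 + 2ρ + ε)V₁`,
then `⟪u + ρw, v + ρw⟫ ≥ ε‖u‖²`. -/
theorem inner_lower_bound_regularized_direction
    {E : Type*} [NormedAddCommGroup E] [InnerProductSpace ℝ E]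
    (u v w : E) (ρ ε V₁ : ℝ) (hρ : 0 < ρ) (hε : 0 < ε) (hV₁ : 0 < V₁)
    (hu : ‖u‖ ^ 2 ≤ V₁) (hv : ‖v‖ ^ 2 ≤ V₁)
    (hw : (1 + 2 * ρ + ε) * V₁ ≤ ρ ^ 2 * ‖w‖ ^ 2 - ρ / 2 * ‖w‖ ^ 2) :
    ε * ‖u‖ ^ 2 ≤ inner ℝ (u + ρ • w) (v + ρ • w) :=
  inner_lower_bound_regularized_direction_general u v w ρ ε V₁ hρ hε hu hv hw
end

section
/- Sorted matching minimizes the maximum ratio (core of Theorem 2). Let n ≥ 1 and let a, c : Fin n → ℝ be antitone (nonincreasing) functions with a(i) > 0 and c(i) > 0 for all i. Then for every permutation σ of Fin n: max over i ∈ Fin n of a(i)/c(i) ≤ max over i ∈ Fin n of a(σ(i))/c(i). -/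
/-!
For each position `i`, the `σ`-images of the positions `j ≥ i` cannot all exceed `i`, since there
is one more such position than there are values `> i`. A position `j ≥ i` with `σ j ≤ i` pairs a
submodel at least as large as `a i` with a client at most as fast as `c i`, so its delay
dominates `a i / c i`.
-/

theorem Equiv.Perm.exists_le_and_apply_le {α : Type*} [LinearOrder α] [LocallyFiniteOrderTop α]
    (σ : Equiv.Perm α) (i : α) : ∃ j, i ≤ j ∧ σ j ≤ i := by
  by_contra! h
  have hmaps : (Finset.Ici i).map σ.toEmbedding ⊆ Finset.Ioi i := by
    intro k hk
    obtain ⟨j, hj, rfl⟩ := Finset.mem_map.1 hk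
    exact Finset.mem_Ioi.2 (h j (Finset.mem_Ici.1 hj))
  have hcard := Finset.card_le_card hmaps
  rw [Finset.card_map, Finset.Ici_eq_cons_Ioi, Finset.card_cons] at hcard
  omega

/-- **Sorted matching minimizes the maximum ratio.**
Let `a c : Fin n → ℝ` be antitone with positive values (`n ≥ 1`). Then for every
permutation `σ` of `Fin n`, `max_i a i / c i ≤ max_i a (σ i) / c i`. -/
theorem sorted_matching_minimizes_max_ratio
    (n : ℕ) (hn : 1 ≤ n) (a c : Fin n → ℝ) (ha : Antitone a) (hc : Antitone c)
    (hapos : ∀ i, 0 < a i) (hcpos : ∀ i, 0 < c i) (σ : Equiv.Perm (Fin n)) :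
    Finset.univ.sup' ⟨⟨0, hn⟩, Finset.mem_univ _⟩ (fun i => a i / c i) ≤
      Finset.univ.sup' ⟨⟨0, hn⟩, Finset.mem_univ _⟩ (fun i => a (σ i) / c i) := by
  refine Finset.sup'_le _ _ fun i _ => ?_
  obtain ⟨j, hij, hσj⟩ := σ.exists_le_and_apply_le i
  calc a i / c i ≤ a (σ j) / c j := div_le_div₀ (hapos _).le (ha hσj) (hcpos j) (hc hij)
    _ ≤ _ := Finset.le_sup' (fun k => a (σ k) / c k) (Finset.mem_univ j)
end
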